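/- Let z ∈ 𝕊 have infinite order. Then the topology τ of A_G(s) is strictly coarser than 𝒯_z, i.e. τ ≤ 𝒯_z and τ ≠ 𝒯_z. -/

import Mathlib

open Filter Topology

noncomputable section

/-- The convergent sequence `s = {0} ∪ {1/n : n ∈ ℕ}` as a subspace of `ℝ`. -/
def sSet : Set ℝ := {x : ℝ | x = 0 ∨ ∃ n : ℕ, 0 < n ∧ x = 1 / n}

/-- The natural map `s → ℤ^(ℕ)`, sending `0 ↦ 0` and `1/n ↦ e_n = single n 1`. -/
def sMap (x : sSet) : ℕ →₀ ℤ :=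
  if (x : ℝ) = 0 then 0 else Finsupp.single ⌈(1 : ℝ) / (x : ℝ)⌉₊ 1

/-- The topology of the Graev free abelian topological group `A_G(s)`, i.e. the finest
group topology on `ℤ^(ℕ)` making `sMap : s → ℤ^(ℕ)` continuous.  In Mathlib's lattice of
(group) topologies `t ≤ s` means `t` is *finer* than `s`, so the finest such group topology
is the `sInf` of the collection of all group topologies making `sMap` continuous; this
`sInf` itself makes `sMap` continuous, since `Continuous` into `t` means
`coinduced sMap _ ≤ t.toTopologicalSpace`, a condition preserved by `sInf`. -/
def tauGT : AddGroupTopology (ℕ →₀ ℤ) :=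
  sInf {t : AddGroupTopology (ℕ →₀ ℤ) | @Continuous _ _ _ t.toTopologicalSpace sMap}

/-- The topology `τ` of `A_G(s)` on `ℤ^(ℕ)`. -/
def tau : TopologicalSpace (ℕ →₀ ℤ) := tauGT.toTopologicalSpace

/-- `c₀(𝕊) = {(z_n) ∈ 𝕊^ℕ : z_n → 1}` as a subgroup of `𝕊^ℕ`. -/
def c0S : Subgroup (ℕ → Circle) where
  carrier := {u : ℕ → Circle | Tendsto u atTop (nhds 1)}
  one_mem' := tendsto_const_nhds
  mul_mem' := fun hu hv => by have h := hu.mul hv; rw [mul_one] at h; exact h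
  inv_mem' := fun hu => by have h := hu.inv; rw [inv_one] at h; exact h

/-- The group `F₀(𝕊)`: the group `c₀(𝕊)` endowed (below) with the sup-metric
`d((z_n),(w_n)) = sup_n |z_n - w_n|`. -/
def F0 : Type := c0S

instance : CommGroup F0 := inferInstanceAs (CommGroup c0S)

namespace F0

/-- The underlying sequence of an element of `F₀(𝕊)`. -/
def seq (u : F0) : ℕ → Circle := Subtype.val (p := fun u => u ∈ c0S) u

lemma seq_tendsto (u : F0) : Tendsto u.seq atTop (nhds 1) :=
  (Subtype.prop (p := fun u => u ∈ c0S) u : _)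

lemma ext {u v : F0} (h : u.seq = v.seq) : u = v :=
  Subtype.ext (p := fun u => u ∈ c0S) h

/-- Construct an element of `F₀(𝕊)` from a sequence converging to `1`. -/
def mk (u : ℕ → Circle) (hu : Tendsto u atTop (nhds 1)) : F0 :=
  Subtype.mk (p := fun u => u ∈ c0S) u hu

lemma dist_circle_le (a b : Circle) : dist a b ≤ 2 := by
  have : dist (a : ℂ) (b : ℂ) ≤ ‖(a : ℂ)‖ + ‖(b : ℂ)‖ := by
    rw [dist_eq_norm]; exact norm_sub_le _ _
  have ha : ‖(a : ℂ)‖ = 1 := a.norm_coe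
  have hb : ‖(b : ℂ)‖ = 1 := b.norm_coe
  calc dist a b = dist (a : ℂ) (b : ℂ) := rfl
    _ ≤ 2 := by rw [ha, hb] at this; linarith

lemma bddAbove_dist (u v : F0) :
    BddAbove (Set.range fun n => dist (u.seq n) (v.seq n)) := by
  refine ⟨2, ?_⟩
  rintro x ⟨n, rfl⟩
  exact dist_circle_le _ _

/-- `F₀(𝕊)` endowed with the metric `d((z_n),(w_n)) = sup_n |z_n - w_n|`. -/
instance : MetricSpace F0 where
  dist u v := ⨆ n, dist (u.seq n) (v.seq n)
  dist_self u := by simp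
  dist_comm u v := by simp only [dist_comm]
  dist_triangle u v w := by
    refine ciSup_le fun n => ?_
    calc dist (u.seq n) (w.seq n) ≤ dist (u.seq n) (v.seq n) + dist (v.seq n) (w.seq n) :=
          dist_triangle _ _ _
      _ ≤ (⨆ m, dist (u.seq m) (v.seq m)) + ⨆ m, dist (v.seq m) (w.seq m) :=
          add_le_add (le_ciSup (bddAbove_dist u v) n) (le_ciSup (bddAbove_dist v w) n)
  eq_of_dist_eq_zero := by
    intro u v h
    refine ext (funext fun n => ?_)
    have hn : dist (u.seq n) (v.seq n) ≤ 0 := h ▸ le_ciSup (bddAbove_dist u v) n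
    exact eq_of_dist_eq_zero (le_antisymm hn dist_nonneg)

lemma dist_def (u v : F0) : dist u v = ⨆ n, dist (u.seq n) (v.seq n) := rfl

end F0

/-- The monomorphism `T_z : ℤ^(ℕ) → A_G(s) × F₀(𝕊)`, `T_z((n_k)) = ((n_k), (z^{n_k})_k)`. -/
def Tz (z : Circle) (x : ℕ →₀ ℤ) : (ℕ →₀ ℤ) × F0 :=
  ⟨x, F0.mk (fun k => z ^ (x k)) (by
    have h : ∀ᶠ k in atTop, (1 : Circle) = z ^ (x k) := by
      obtain ⟨N, hN⟩ := x.support.finite_toSet.bddAbove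
      filter_upwards [eventually_ge_atTop (N + 1)] with k hk
      have hx : x k = 0 := by
        by_contra hne
        have : k ≤ N := hN (Finsupp.mem_support_iff.mpr hne)
        omega
      simp [hx]
    exact tendsto_const_nhds.congr' h)⟩

/-- The topology `𝒯_z` on `ℤ^(ℕ)` induced from `A_G(s) × F₀(𝕊)` via `T_z`,
where the first factor carries `τ` and the second the sup-metric topology. -/
def TzTop (z : Circle) : TopologicalSpace (ℕ →₀ ℤ) :=
  TopologicalSpace.induced (Tz z) (@instTopologicalSpaceProd _ _ tau inferInstance)

/-! `τ ≤ 𝒯_z` because `T_z` followed by the first projection is the identity. For `τ ≠ 𝒯_z`: the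
basis vectors `e_{n+1}` converge to `0` in `τ`, being the images of `1/(n+1) → 0` under the
continuous map `s → A_G(s)`; but the `(n+1)`-th coordinate of the second component of
`T_z(e_{n+1})` is `z`, so in `F₀(𝕊)` it stays at distance at least `|z - 1| > 0` from `T_z(0)`. -/

lemma F0.dist_seq_le (u v : F0) (n : ℕ) : dist (u.seq n) (v.seq n) ≤ dist u v :=
  le_ciSup (F0.bddAbove_dist u v) n

lemma Tz_snd_seq (z : Circle) (x : ℕ →₀ ℤ) (k : ℕ) : (Tz z x).2.seq k = z ^ x k := rfl

lemma dist_le_dist_Tz_single (z : Circle) (m : ℕ) :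
    dist z 1 ≤ dist (Tz z (Finsupp.single m 1)).2 (Tz z 0).2 := by
  simpa [Tz_snd_seq] using F0.dist_seq_le (Tz z (Finsupp.single m 1)).2 (Tz z 0).2 m

def sZero : sSet := ⟨0, Or.inl rfl⟩

def sInvSucc (n : ℕ) : sSet := ⟨1 / (n + 1 : ℕ), Or.inr ⟨n + 1, n.succ_pos, rfl⟩⟩

lemma tendsto_sInvSucc : Tendsto sInvSucc atTop (𝓝 sZero) := by
  rw [tendsto_subtype_rng]
  simpa [sInvSucc, sZero] using
    (tendsto_one_div_add_atTop_nhds_zero_nat : Tendsto _ _ (𝓝 (0 : ℝ)))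

lemma sMap_sZero : sMap sZero = 0 := by simp [sMap, sZero]

lemma sMap_sInvSucc (n : ℕ) : sMap (sInvSucc n) = Finsupp.single (n + 1) 1 := by
  simp [sMap, sInvSucc, Nat.cast_add_one_ne_zero, Nat.ceil_add_one]

lemma continuous_sMap_tau : Continuous[_, tau] sMap := by
  rw [tau, tauGT, AddGroupTopology.toTopologicalSpace_sInf, continuous_sInf_rng]
  rintro _ ⟨t, ht, rfl⟩
  exact ht

lemma tendsto_single_tau :
    Tendsto (fun n : ℕ => (Finsupp.single (n + 1) 1 : ℕ →₀ ℤ)) atTop (@nhds _ tau 0) := by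
  let := tau
  have h := (continuous_sMap_tau.tendsto sZero).comp tendsto_sInvSucc
  rwa [sMap_sZero, Function.comp_def, funext sMap_sInvSucc] at h

lemma TzTop_eq (z : Circle) :
    TzTop z = tau ⊓ TopologicalSpace.induced (fun x => (Tz z x).2) inferInstance := by
  change TopologicalSpace.induced (Tz z)
    (TopologicalSpace.induced Prod.fst tau ⊓ TopologicalSpace.induced Prod.snd inferInstance) = _
  rw [induced_inf, induced_compose, induced_compose]
  exact congrArg (· ⊓ _) (induced_id (t := tau))

lemma TzTop_le_tau (z : Circle) : TzTop z ≤ tau :=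
  (TzTop_eq z).trans_le inf_le_left

lemma continuous_Tz_snd (z : Circle) : Continuous[TzTop z, _] fun x => (Tz z x).2 :=
  continuous_iff_le_induced.mpr ((TzTop_eq z).trans_le inf_le_right)

lemma not_tendsto_single_TzTop (z : Circle) (hz : z ≠ 1) :
    ¬Tendsto (fun n : ℕ => (Finsupp.single (n + 1) 1 : ℕ →₀ ℤ)) atTop
      (@nhds _ (TzTop z) 0) := by
  intro h
  let := TzTop z
  have hdist := tendsto_iff_dist_tendsto_zero.mp (((continuous_Tz_snd z).tendsto 0).comp h)
  have : dist z 1 ≤ 0 :=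
    ge_of_tendsto hdist (Eventually.of_forall fun n => dist_le_dist_Tz_single z (n + 1))
  exact hz (dist_le_zero.mp this)

/-- For `z ∈ 𝕊` of infinite order, `τ` is strictly coarser than `𝒯_z`:
every `τ`-open set is `𝒯_z`-open, and `τ ≠ 𝒯_z`. -/
theorem tau_lt_TzTop (z : Circle) (hz : ∀ n : ℕ, 0 < n → z ^ n ≠ 1) :
    (∀ U : Set (ℕ →₀ ℤ), IsOpen[tau] U → IsOpen[TzTop z] U) ∧ tau ≠ TzTop z := by
  have hz1 : z ≠ 1 := by simpa using hz 1 one_pos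
  exact ⟨TopologicalSpace.le_def.mp (TzTop_le_tau z),
    fun heq => not_tendsto_single_TzTop z hz1 (heq ▸ tendsto_single_tau)⟩

end
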